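/- arXiv:1112.5248 — 2 statements merged into one kernel-verified Lean document; each statement's English description precedes it below -/
import Mathlib

section
/- Let α_n, β_n, γ_n be positive reals with α_n → ∞, β_n → ∞, γ_n → ∞, α_n/γ_n → 0 and β_n/γ_n → 0. Then the sequence of boxes (I(α_n, β_n, γ_n))_{n≥1} is a two-sided Følner sequence in H₃(ℝ). Moreover, if in addition (α_n β_n)/γ_n → 0, then λ(I(α_n,β_n,γ_n) △ I(α_n,β_n,γ_n)^{-1}) / λ(I(α_n,β_n,γ_n)) → 0 as n → ∞. -/
open Filter Topology Pointwise

/-- The real Heisenberg group `H₃(ℝ)`: `⟨a, b, c⟩` encodes the upper unitriangular `3 × 3`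
matrix with entry `a` at position `(1,2)`, `b` at position `(2,3)` and `c` at position `(1,3)`. -/
@[ext] structure H3 : Type where
  a : ℝ
  b : ℝ
  c : ℝ

namespace H3

instance : Mul H3 := ⟨fun g h => ⟨g.a + h.a, g.b + h.b, g.c + h.c + g.a * h.b⟩⟩
instance : One H3 := ⟨⟨0, 0, 0⟩⟩
instance : Inv H3 := ⟨fun g => ⟨-g.a, -g.b, g.a * g.b - g.c⟩⟩

@[simp] lemma mul_a (g h : H3) : (g * h).a = g.a + h.a := rfl
@[simp] lemma mul_b (g h : H3) : (g * h).b = g.b + h.b := rfl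
@[simp] lemma mul_c (g h : H3) : (g * h).c = g.c + h.c + g.a * h.b := rfl
@[simp] lemma one_a : (1 : H3).a = 0 := rfl
@[simp] lemma one_b : (1 : H3).b = 0 := rfl
@[simp] lemma one_c : (1 : H3).c = 0 := rfl
@[simp] lemma inv_a (g : H3) : g⁻¹.a = -g.a := rfl
@[simp] lemma inv_b (g : H3) : g⁻¹.b = -g.b := rfl
@[simp] lemma inv_c (g : H3) : g⁻¹.c = g.a * g.b - g.c := rfl

instance : Group H3 where
  mul_assoc g h k := by ext <;> simp <;> ring
  one_mul g := by ext <;> simp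
  mul_one g := by ext <;> simp
  inv_mul_cancel g := by ext <;> simp

def toProd (g : H3) : ℝ × ℝ × ℝ := (g.a, g.b, g.c)
def ofProd (p : ℝ × ℝ × ℝ) : H3 := ⟨p.1, p.2.1, p.2.2⟩

/-- The natural (Euclidean) topology of `H₃(ℝ)`. -/
instance : TopologicalSpace H3 := TopologicalSpace.induced toProd inferInstance
/-- The Borel σ-algebra of `H₃(ℝ)`. -/
instance : MeasurableSpace H3 := MeasurableSpace.comap toProd inferInstance

/-- A Haar measure on `H₃(ℝ)` (Lebesgue measure in the upper-triangular coordinates);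
it satisfies `haar (box α β γ) = 8αβγ`. -/
noncomputable def haar : MeasureTheory.Measure H3 :=
  MeasureTheory.Measure.map ofProd MeasureTheory.volume

/-- The one-parameter subgroup `a(t)` (entry `t` at position `(1,2)`). -/
def A (t : ℝ) : H3 := ⟨t, 0, 0⟩
/-- The one-parameter subgroup `b(t)` (entry `t` at position `(2,3)`). -/
def B (t : ℝ) : H3 := ⟨0, t, 0⟩
/-- The central one-parameter subgroup `c(t)` (entry `t` at position `(1,3)`). -/
def C (t : ℝ) : H3 := ⟨0, 0, t⟩

/-- The flip automorphism `θ` of `H₃(ℝ)`: `θ(a(t)) = b(t)`, `θ(b(t)) = a(t)`, `θ(c(t)) = c(-t)`. -/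
def flip (g : H3) : H3 := ⟨g.b, g.a, g.a * g.b - g.c⟩

/-- The box `I(α,β,γ) = {c(t₃)b(t₂)a(t₁) : |t₁| ≤ α, |t₂| ≤ β, |t₃| ≤ γ}`. -/
def box (α β γ : ℝ) : Set H3 := {g : H3 | |g.a| ≤ α ∧ |g.b| ≤ β ∧ |g.c| ≤ γ}

end H3

/-- A (jointly measurable) measure-preserving action of the Heisenberg group `H₃(ℝ)`
by invertible measure-preserving transformations on a measure space `(X, μ)`. -/
structure H3System : Type 1 where
  X : Type
  [ms : MeasurableSpace X]
  μ : MeasureTheory.Measure X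
  T : H3 → X → X
  t_one : ∀ x, T 1 x = x
  t_mul : ∀ g h x, T (g * h) x = T g (T h x)
  t_meas : Measurable fun p : H3 × X => T p.1 p.2
  t_mp : ∀ g, MeasureTheory.MeasurePreserving (T g) μ μ

attribute [instance] H3System.ms

section BaseDefs

open MeasureTheory

variable {Y : Type*} [MeasurableSpace Y]

/-- Mixing for a family of measure-preserving maps indexed by `H₃(ℝ)`:
`ν (S g A ∩ B) → ν A · ν B` as `g → ∞`. -/
def MixingFam (ν : Measure Y) (S : H3 → Y → Y) : Prop :=
  ∀ A B : Set Y, MeasurableSet A → MeasurableSet B →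
    Tendsto (fun g : H3 => ν (S g '' A ∩ B)) (cocompact H3) (𝓝 (ν A * ν B))

/-- Mixing of order `l` (with `l+1` sets) for a family of maps indexed by `H₃(ℝ)`. -/
def MixingOfOrderFam (ν : Measure Y) (S : H3 → Y → Y) (l : ℕ) : Prop :=
  ∀ ε : ℝ, 0 < ε → ∀ A : Fin (l + 1) → Set Y, (∀ i, MeasurableSet (A i)) →
    ∃ K : Set H3, IsCompact K ∧
      ∀ g : Fin (l + 1) → H3, (∀ i j, i ≠ j → g i * (g j)⁻¹ ∉ K) →
        |(ν (⋂ i, S (g i) '' A i)).toReal - ∏ i, (ν (A i)).toReal| < ε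

/-- Mixing for a flow (a family of maps indexed by `ℝ`). -/
def FlowMixingFam (ν : Measure Y) (S : ℝ → Y → Y) : Prop :=
  ∀ A B : Set Y, MeasurableSet A → MeasurableSet B →
    Tendsto (fun t : ℝ => ν (S t '' A ∩ B)) (cocompact ℝ) (𝓝 (ν A * ν B))

/-- Mixing of order `l` (with `l+1` sets) for a flow. -/
def FlowMixingOfOrderFam (ν : Measure Y) (S : ℝ → Y → Y) (l : ℕ) : Prop :=
  ∀ ε : ℝ, 0 < ε → ∀ A : Fin (l + 1) → Set Y, (∀ i, MeasurableSet (A i)) →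
    ∃ K : Set ℝ, IsCompact K ∧
      ∀ t : Fin (l + 1) → ℝ, (∀ i j, i ≠ j → t i - t j ∉ K) →
        |(ν (⋂ i, S (t i) '' A i)).toReal - ∏ i, (ν (A i)).toReal| < ε

namespace H3System

variable (s : H3System)

/-- `(X, ℬ, μ)` is a standard probability space. -/
def IsStdProb : Prop := StandardBorelSpace s.X ∧ IsProbabilityMeasure s.μ

/-- Freeness: for almost every point, only the identity fixes it. -/
def Free : Prop := ∀ᵐ x ∂s.μ, ∀ g : H3, s.T g x = x → g = 1

/-- Mixing of the whole `H₃(ℝ)`-action. -/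
def Mixing : Prop := MixingFam s.μ s.T

/-- Mixing of the central flow `(T_{c(t)})_{t∈ℝ}`. -/
def CentralMixing : Prop := FlowMixingFam s.μ fun t => s.T (H3.C t)

/-- Ergodicity of the central flow `(T_{c(t)})_{t∈ℝ}`. -/
def CentralErgodic : Prop :=
  ∀ A : Set s.X, MeasurableSet A → (∀ t : ℝ, s.T (H3.C t) ⁻¹' A = A) →
    s.μ A = 0 ∨ s.μ Aᶜ = 0

/-- Rigidity: some sequence `gₙ → ∞` satisfies `μ(T_{gₙ}A ∩ B) → μ(A ∩ B)`. -/
def Rigid : Prop :=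
  ∃ g : ℕ → H3, Tendsto g atTop (cocompact H3) ∧
    ∀ A B : Set s.X, MeasurableSet A → MeasurableSet B →
      Tendsto (fun n => s.μ (s.T (g n) '' A ∩ B)) atTop (𝓝 (s.μ (A ∩ B)))

/-- Weak mixing: the diagonal product action on `(X × X, μ × μ)` is ergodic. -/
def WeaklyMixing : Prop :=
  ∀ A : Set (s.X × s.X), MeasurableSet A →
    (∀ g : H3, (fun p : s.X × s.X => (s.T g p.1, s.T g p.2)) ⁻¹' A = A) →
    (s.μ.prod s.μ) A = 0 ∨ (s.μ.prod s.μ) Aᶜ = 0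

/-- Zero type (mixing in infinite measure): `μ(T_g D₁ ∩ D₂) → 0` as `g → ∞`
for sets of finite measure. -/
def ZeroType : Prop :=
  ∀ D₁ D₂ : Set s.X, MeasurableSet D₁ → MeasurableSet D₂ → s.μ D₁ < ⊤ → s.μ D₂ < ⊤ →
    Tendsto (fun g : H3 => s.μ (s.T g '' D₁ ∩ D₂)) (cocompact H3) (𝓝 0)

end H3System

/-- A (one-sided) Følner sequence of relatively compact subsets of positive finite
Haar measure in `H₃(ℝ)`. -/
def IsFolnerSeq (F : ℕ → Set H3) : Prop :=
  (∀ n, IsCompact (closure (F n)) ∧ 0 < H3.haar (F n) ∧ H3.haar (F n) < ⊤) ∧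
  ∀ g : H3,
    Tendsto (fun n => H3.haar (symmDiff ((g * ·) '' F n) (F n)) / H3.haar (F n)) atTop (𝓝 0)

/-- A Rokhlin tower `(Y, f, F)` for the system `s`: `f : Y → F` is measurable and
`f⁻¹(gH) = T_g f⁻¹(H)` for Borel `H ⊆ F` and `g` with `gH ⊆ F`. -/
def IsRokhlinTower (s : H3System) (Y : Set s.X) (f : s.X → H3) (F : Set H3) : Prop :=
  MeasurableSet Y ∧ Measurable f ∧ (∀ x ∈ Y, f x ∈ F) ∧
  ∀ (H : Set H3) (g : H3), MeasurableSet H → H ⊆ F → (g * ·) '' H ⊆ F →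
    Y ∩ f ⁻¹' ((g * ·) '' H) = s.T g '' (Y ∩ f ⁻¹' H)

/-- Rank one along a given sequence `(Fₙ)`: there are Rokhlin towers `(Yₙ, fₙ, Fₙ)` such
that every measurable set is approximated by unions of levels of the towers. -/
def RankOneAlong (s : H3System) (F : ℕ → Set H3) : Prop :=
  ∃ (Y : ℕ → Set s.X) (f : ℕ → s.X → H3),
    (∀ n, IsRokhlinTower s (Y n) (f n) (F n)) ∧
    ∀ Bset : Set s.X, MeasurableSet Bset →
      ∃ Hs : ℕ → Set H3, (∀ n, MeasurableSet (Hs n) ∧ Hs n ⊆ F n) ∧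
        Tendsto (fun n => s.μ (symmDiff Bset (Y n ∩ (f n) ⁻¹' Hs n))) atTop (𝓝 0)

/-- Rank one: rank one along some Følner sequence. -/
def RankOne (s : H3System) : Prop := ∃ F : ℕ → Set H3, IsFolnerSeq F ∧ RankOneAlong s F

section Joinings

variable (s : H3System) {ι : Type} (φ : ι → H3)

/-- A 2-fold self-joining of the sub-action `(T_{φ i})_{i∈ι}`: a measure on `X × X`,
invariant under the diagonal action, whose both marginals equal `μ`. -/
def IsSelfJoining2 (ν : Measure (s.X × s.X)) : Prop :=
  IsProbabilityMeasure ν ∧ ν.map Prod.fst = s.μ ∧ ν.map Prod.snd = s.μ ∧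
  ∀ i : ι, MeasurePreserving (fun p : s.X × s.X => (s.T (φ i) p.1, s.T (φ i) p.2)) ν ν

/-- An ergodic 2-fold self-joining. -/
def IsErgodicSelfJoining2 (ν : Measure (s.X × s.X)) : Prop :=
  IsSelfJoining2 s φ ν ∧
  ∀ A : Set (s.X × s.X), MeasurableSet A →
    (∀ i : ι, (fun p : s.X × s.X => (s.T (φ i) p.1, s.T (φ i) p.2)) ⁻¹' A = A) →
    ν A = 0 ∨ ν Aᶜ = 0

/-- The centralizer of the sub-action `(T_{φ i})_{i∈ι}`: invertible measure-preserving
transformations commuting (a.e.) with every `T_{φ i}`. -/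
def InCentralizer (R : s.X → s.X) : Prop :=
  Measurable R ∧ MeasurePreserving R s.μ s.μ ∧
  (∃ R' : s.X → s.X, Measurable R' ∧ MeasurePreserving R' s.μ s.μ ∧
    (∀ᵐ x ∂s.μ, R' (R x) = x) ∧ (∀ᵐ x ∂s.μ, R (R' x) = x)) ∧
  ∀ i : ι, ∀ᵐ x ∂s.μ, R (s.T (φ i) x) = s.T (φ i) (R x)

/-- The off-diagonal (graph) self-joining `μ_R` determined by `R`,
i.e. `μ_R(A × B) = μ(A ∩ R⁻¹B) = μ(RA ∩ B)`. -/
noncomputable def graphJoining (R : s.X → s.X) : Measure (s.X × s.X) :=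
  s.μ.map fun x => (x, R x)

/-- 2-fold simplicity of the sub-action `(T_{φ i})_{i∈ι}`: every ergodic 2-fold
self-joining is either off-diagonal over the centralizer or product measure. -/
def TwoFoldSimple : Prop :=
  ∀ ν : Measure (s.X × s.X), IsErgodicSelfJoining2 s φ ν →
    (∃ R : s.X → s.X, InCentralizer s φ R ∧ ν = graphJoining s R) ∨ ν = s.μ.prod s.μ

/-- An `l`-fold self-joining of the sub-action `(T_{φ i})_{i∈ι}`. -/
def IsSelfJoining (l : ℕ) (ν : Measure (Fin l → s.X)) : Prop :=
  IsProbabilityMeasure ν ∧ (∀ k : Fin l, ν.map (fun x => x k) = s.μ) ∧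
  ∀ i : ι, MeasurePreserving (fun (x : Fin l → s.X) k => s.T (φ i) (x k)) ν ν

/-- Simplicity: 2-fold simple, and for every `l ≥ 2` the only `l`-fold self-joining all of
whose pairwise 2-dimensional projections are `μ × μ` is the product measure. -/
def Simple : Prop :=
  TwoFoldSimple s φ ∧
  ∀ l : ℕ, 2 ≤ l → ∀ ν : Measure (Fin l → s.X), IsSelfJoining s φ l ν →
    (∀ j k : Fin l, j ≠ k → ν.map (fun x => (x j, x k)) = s.μ.prod s.μ) →
    ν = Measure.pi fun _ => s.μ

/-- The centralizer of the sub-action `(T_{φ i})_{i∈ι}` equals `{T_g : g ∈ H₃(ℝ)}`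
(modulo null sets). -/
def CentralizerEq : Prop :=
  ∀ R : s.X → s.X, InCentralizer s φ R ↔ ∃ g : H3, ∀ᵐ x ∂s.μ, R x = s.T g x

/-- Minimal self-joinings (MSJ) of the sub-action `(T_{φ i})_{i∈ι}`: simple, and the
centralizer consists of the transformations of the sub-action itself. -/
def HasMSJ : Prop :=
  Simple s φ ∧ ∀ R : s.X → s.X, InCentralizer s φ R → ∃ i : ι, ∀ᵐ x ∂s.μ, R x = s.T (φ i) x

end Joinings

end BaseDefs

/-! Haar measure is Lebesgue measure in the coordinates `(a, b, c)`, in which left and right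
translations are shears of determinant one followed by translations; so `λ` is bi-invariant.
If `I = I(α, β, γ)` and the coordinates of `g` are bounded by `r`, then `gI`, `g⁻¹I`, `Ig`, `Ig⁻¹`
all lie in `B = I(α + r, β + r, γ + r² + r + r(α + β))`, hence by invariance `λ(gI ∆ I)` and
`λ(Ig ∆ I)` are at most `2λ(B \ I)`; and `λ(B)/λ(I) → 1` because `α, β, γ → ∞` and
`α/γ, β/γ → 0`.
Inversion moves the central coordinate by at most `αβ`, so
`I(α, β, γ - αβ) ⊆ I⁻¹ ⊆ I(α, β, γ + αβ)`, whence `λ(I ∆ I⁻¹)/λ(I) ≤ 2αβ/γ`. -/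

section

open MeasureTheory

theorem measure_symmDiff_image_le {X : Type*} [MeasurableSpace X] {μ : Measure X} (e : X ≃ᵐ X)
    (he : MeasurePreserving e μ μ) {F B : Set X} (hB : e '' F ⊆ B) (hB' : e.symm '' F ⊆ B) :
    μ (symmDiff (e '' F) F) ≤ 2 * μ (B \ F) := by
  have himage (S : Set X) : μ (e '' S) = μ S := by
    rw [e.image_eq_preimage_symm, (he.symm e).measure_preimage_equiv]
  have hdiff : F \ e '' F = e '' (e.symm '' F \ F) := by
    rw [Set.image_sdiff e.injective, Set.image_image]
    simp only [MeasurableEquiv.apply_symm_apply, Set.image_id']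
  calc μ (symmDiff (e '' F) F) ≤ μ (e '' F \ F) + μ (F \ e '' F) := measure_union_le _ _
    _ = μ (e '' F \ F) + μ (e.symm '' F \ F) := by rw [hdiff, himage]
    _ ≤ μ (B \ F) + μ (B \ F) := by gcongr
    _ = 2 * μ (B \ F) := (two_mul _).symm

theorem measurePreserving_skew_add_right {α G : Type*} [MeasurableSpace α] [MeasurableSpace G]
    [AddGroup G] [MeasurableAdd₂ G] (μ : Measure α) (ν : Measure G) [SFinite μ] [SFinite ν]
    [ν.IsAddRightInvariant] {f : α → G} (hf : Measurable f) :
    MeasurePreserving (fun p : α × G => (p.1, p.2 + f p.1)) (μ.prod ν) (μ.prod ν) :=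
  (MeasurePreserving.id μ).skew_product (by fun_prop)
    (ae_of_all _ fun a => map_add_right_eq_self ν (f a))

end

namespace H3

open MeasureTheory Set

def measurableEquivProd : H3 ≃ᵐ ℝ × ℝ × ℝ where
  toFun := toProd
  invFun := ofProd
  left_inv _ := rfl
  right_inv _ := rfl
  measurable_toFun := comap_measurable toProd
  measurable_invFun _ := fun ⟨_, ht, hts⟩ => hts ▸ ht

lemma continuous_toProd : Continuous toProd := continuous_induced_dom

lemma haar_apply (S : Set H3) : haar S = volume (ofProd ⁻¹' S) :=
  measurableEquivProd.symm.map_apply S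

lemma measurePreserving_ofProd : MeasurePreserving ofProd volume haar :=
  ⟨measurableEquivProd.symm.measurable, rfl⟩

lemma measurePreserving_toProd : MeasurePreserving toProd haar volume :=
  measurePreserving_ofProd.symm measurableEquivProd.symm

lemma measurePreserving_of_toProd {φ : H3 → H3} {ψ : ℝ × ℝ × ℝ → ℝ × ℝ × ℝ}
    (hψ : MeasurePreserving ψ volume volume) (hφ : ∀ x, toProd (φ x) = ψ (toProd x)) :
    MeasurePreserving φ haar haar := by
  have : φ = ofProd ∘ ψ ∘ toProd := funext fun x => by
    rw [Function.comp_apply, Function.comp_apply, ← hφ]; rfl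
  exact this ▸ measurePreserving_ofProd.comp (hψ.comp measurePreserving_toProd)

lemma measurePreserving_mul_left (g : H3) : MeasurePreserving (g * ·) haar haar := by
  refine measurePreserving_of_toProd
    ((measurePreserving_add_right (volume.prod volume) (toProd g)).comp
    ((MeasurePreserving.id volume).prod
      (measurePreserving_skew_add_right volume volume (measurable_const_mul g.a)))) fun h => ?_
  simp only [toProd, mul_a, mul_b, mul_c, Function.comp_apply, Prod.map, id, Prod.mk_add_mk]
  ext <;> simp only <;> ring

lemma measurePreserving_mul_right (g : H3) : MeasurePreserving (· * g) haar haar := by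
  refine measurePreserving_of_toProd
    ((measurePreserving_add_right (volume.prod volume) (toProd g)).comp
    (measurePreserving_skew_add_right volume volume
      (f := fun a => ((0 : ℝ), a * g.b)) (by fun_prop))) fun h => ?_
  simp only [toProd, mul_a, mul_b, mul_c, Function.comp_apply, Prod.mk_add_mk]
  ext <;> simp only <;> ring

instance : MeasurableMul H3 :=
  ⟨fun g => (measurePreserving_mul_left g).measurable,
    fun g => (measurePreserving_mul_right g).measurable⟩

lemma preimage_ofProd_box (α β γ : ℝ) :
    ofProd ⁻¹' box α β γ = Icc (-α) α ×ˢ Icc (-β) β ×ˢ Icc (-γ) γ := by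
  ext p
  simp only [box, ofProd, mem_preimage, mem_ofPred_eq, mem_prod, mem_Icc, abs_le]

lemma measurableSet_box (α β γ : ℝ) : MeasurableSet (box α β γ) := by
  change MeasurableSet (toProd ⁻¹' (ofProd ⁻¹' box α β γ))
  rw [preimage_ofProd_box]
  exact measurableEquivProd.measurable
    (measurableSet_Icc.prod (measurableSet_Icc.prod measurableSet_Icc))

lemma isCompact_box (α β γ : ℝ) : IsCompact (box α β γ) := by
  have hbox : box α β γ = ofProd '' (Icc (-α) α ×ˢ Icc (-β) β ×ˢ Icc (-γ) γ) := by
    rw [← preimage_ofProd_box, image_preimage_eq _ fun g => ⟨toProd g, rfl⟩]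
  rw [hbox]
  exact (isCompact_Icc.prod (isCompact_Icc.prod isCompact_Icc)).image
    (continuous_induced_rng.2 continuous_id)

lemma haar_box {α β : ℝ} (hα : 0 ≤ α) (hβ : 0 ≤ β) (γ : ℝ) :
    haar (box α β γ) = ENNReal.ofReal (8 * α * β * γ) := by
  rw [haar_apply, preimage_ofProd_box, Measure.volume_eq_prod, Measure.prod_prod,
    Measure.volume_eq_prod, Measure.prod_prod, Real.volume_Icc, Real.volume_Icc, Real.volume_Icc,
    ← ENNReal.ofReal_mul (by linarith), ← ENNReal.ofReal_mul (by linarith)]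
  ring_nf

lemma box_mono {α β γ α' β' γ' : ℝ} (hα : α ≤ α') (hβ : β ≤ β') (hγ : γ ≤ γ') :
    box α β γ ⊆ box α' β' γ' :=
  fun _ ⟨ha, hb, hc⟩ => ⟨ha.trans hα, hb.trans hβ, hc.trans hγ⟩

lemma haar_box_diff_le {α β γ α' β' γ' : ℝ} (hα : 0 ≤ α) (hβ : 0 ≤ β) (hα' : α ≤ α')
    (hβ' : β ≤ β') (hγ' : γ ≤ γ') :
    haar (box α' β' γ' \ box α β γ) ≤ ENNReal.ofReal (8 * (α' * β' * γ' - α * β * γ)) := by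
  rw [measure_sdiff (box_mono hα' hβ' hγ') (measurableSet_box α β γ).nullMeasurableSet
    (by rw [haar_box hα hβ]; exact ENNReal.ofReal_ne_top), haar_box hα hβ,
    haar_box (hα.trans hα') (hβ.trans hβ'), tsub_le_iff_right]
  calc ENNReal.ofReal (8 * α' * β' * γ')
      = ENNReal.ofReal (8 * (α' * β' * γ' - α * β * γ) + 8 * α * β * γ) := by ring_nf
    _ ≤ _ := ENNReal.ofReal_add_le

lemma ofReal_div_haar_box {α β γ : ℝ} (hα : 0 < α) (hβ : 0 < β) (hγ : 0 < γ) (x : ℝ) :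
    ENNReal.ofReal x / haar (box α β γ) = ENNReal.ofReal (x / (8 * α * β * γ)) := by
  rw [haar_box hα.le hβ.le, ENNReal.ofReal_div_of_pos (by positivity)]

lemma haar_symmDiff_image_box_div_le (e : H3 ≃ᵐ H3) (he : MeasurePreserving e haar haar)
    {α β γ α' β' γ' : ℝ} (hα : 0 < α) (hβ : 0 < β) (hγ : 0 < γ) (hα' : α ≤ α') (hβ' : β ≤ β')
    (hγ' : γ ≤ γ') (hB : e '' box α β γ ⊆ box α' β' γ')
    (hB' : e.symm '' box α β γ ⊆ box α' β' γ') :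
    haar (symmDiff (e '' box α β γ) (box α β γ)) / haar (box α β γ)
      ≤ ENNReal.ofReal (2 * (α' * β' * γ' / (α * β * γ) - 1)) := by
  have hdiff := haar_box_diff_le hα.le hβ.le hα' hβ' hγ'
  calc haar (symmDiff (e '' box α β γ) (box α β γ)) / haar (box α β γ)
      ≤ ENNReal.ofReal (2 * (8 * (α' * β' * γ' - α * β * γ))) / haar (box α β γ) := by
        gcongr
        rw [ENNReal.ofReal_mul zero_le_two, ENNReal.ofReal_ofNat]
        exact (measure_symmDiff_image_le e he hB hB').trans (by gcongr)
    _ = ENNReal.ofReal (2 * (α' * β' * γ' / (α * β * γ) - 1)) := by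
        rw [ofReal_div_haar_box hα hβ hγ]
        congr 1
        field_simp

lemma image_mul_left_box_subset {g : H3} {r s : ℝ} (ha : |g.a| ≤ r) (hb : |g.b| ≤ r)
    (hc : |g.c| ≤ s) (α β γ : ℝ) :
    (g * ·) '' box α β γ ⊆ box (α + r) (β + r) (γ + s + r * β) := by
  have hr : 0 ≤ r := (abs_nonneg _).trans ha
  rintro _ ⟨h, ⟨h1, h2, h3⟩, rfl⟩
  refine ⟨(abs_add_le _ _).trans (by linarith), (abs_add_le _ _).trans (by linarith), ?_⟩
  calc |g.c + h.c + g.a * h.b| ≤ |g.c| + |h.c| + |g.a| * |h.b| := by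
        rw [← abs_mul]; exact abs_add_three _ _ _
    _ ≤ s + γ + r * β := by gcongr
    _ = γ + s + r * β := by ring

lemma image_mul_right_box_subset {g : H3} {r s : ℝ} (ha : |g.a| ≤ r) (hb : |g.b| ≤ r)
    (hc : |g.c| ≤ s) (α β γ : ℝ) :
    (· * g) '' box α β γ ⊆ box (α + r) (β + r) (γ + s + α * r) := by
  rintro _ ⟨h, ⟨h1, h2, h3⟩, rfl⟩
  have hα : 0 ≤ α := (abs_nonneg _).trans h1
  refine ⟨(abs_add_le _ _).trans (by linarith), (abs_add_le _ _).trans (by linarith), ?_⟩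
  calc |h.c + g.c + h.a * g.b| ≤ |h.c| + |g.c| + |h.a| * |g.b| := by
        rw [← abs_mul]; exact abs_add_three _ _ _
    _ ≤ γ + s + α * r := by gcongr

lemma haar_symmDiff_mul_box_div_le {α β γ r : ℝ} (hα : 0 < α) (hβ : 0 < β) (hγ : 0 < γ)
    {g : H3} (ha : |g.a| ≤ r) (hb : |g.b| ≤ r) (hc : |g.c| ≤ r) :
    haar (symmDiff ((g * ·) '' box α β γ) (box α β γ)) / haar (box α β γ)
        ≤ ENNReal.ofReal (2 * ((α + r) * (β + r) * (γ + (r ^ 2 + r) + r * (α + β))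
          / (α * β * γ) - 1)) ∧
      haar (symmDiff ((· * g) '' box α β γ) (box α β γ)) / haar (box α β γ)
        ≤ ENNReal.ofReal (2 * ((α + r) * (β + r) * (γ + (r ^ 2 + r) + r * (α + β))
          / (α * β * γ) - 1)) := by
  have hr : 0 ≤ r := (abs_nonneg _).trans ha
  have hc' : |g.c| ≤ r ^ 2 + r := by nlinarith
  have hc_inv : |g⁻¹.c| ≤ r ^ 2 + r := by
    rw [inv_c]
    calc |g.a * g.b - g.c| ≤ |g.a| * |g.b| + |g.c| := by rw [← abs_mul]; exact abs_sub _ _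
      _ ≤ r ^ 2 + r := by nlinarith [abs_nonneg g.b]
  have hsub {h : H3} (ha : |h.a| ≤ r) (hb : |h.b| ≤ r) (hc : |h.c| ≤ r ^ 2 + r) :
      (h * ·) '' box α β γ ⊆ box (α + r) (β + r) (γ + (r ^ 2 + r) + r * (α + β)) ∧
      (· * h) '' box α β γ ⊆ box (α + r) (β + r) (γ + (r ^ 2 + r) + r * (α + β)) :=
    ⟨(image_mul_left_box_subset ha hb hc α β γ).trans (box_mono le_rfl le_rfl (by nlinarith)),
      (image_mul_right_box_subset ha hb hc α β γ).trans (box_mono le_rfl le_rfl (by nlinarith))⟩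
  have hg := hsub ha hb hc'
  have hg_inv := hsub (by simpa using ha) (by simpa using hb) hc_inv
  constructor
  · exact haar_symmDiff_image_box_div_le (MeasurableEquiv.mulLeft g) (measurePreserving_mul_left g)
      hα hβ hγ (by linarith) (by linarith) (by nlinarith) hg.1
      (by rw [MeasurableEquiv.symm_mulLeft]; exact hg_inv.1)
  · exact haar_symmDiff_image_box_div_le (MeasurableEquiv.mulRight g)
      (measurePreserving_mul_right g) hα hβ hγ (by linarith) (by linarith) (by nlinarith) hg.2
      (by rw [MeasurableEquiv.symm_mulRight]; exact hg_inv.2)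

lemma exists_abs_le_of_isCompact {K : Set H3} (hK : IsCompact K) :
    ∃ r, ∀ g ∈ K, |g.a| ≤ r ∧ |g.b| ≤ r ∧ |g.c| ≤ r := by
  obtain ⟨r, hr⟩ := hK.exists_bound_of_continuousOn continuous_toProd.continuousOn
  refine ⟨r, fun g hg => ?_⟩
  simpa only [toProd, Prod.norm_def, Real.norm_eq_abs, max_le_iff] using hr g hg

lemma inv_box_subset (α β γ : ℝ) : (box α β γ)⁻¹ ⊆ box α β (γ + α * β) := by
  rintro x ⟨h1, h2, h3⟩
  simp only [inv_a, inv_b, inv_c, abs_neg] at h1 h2 h3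
  have hα : 0 ≤ α := (abs_nonneg _).trans h1
  refine ⟨h1, h2, ?_⟩
  calc |x.c| = |x.a * x.b - (x.a * x.b - x.c)| := by rw [sub_sub_cancel]
    _ ≤ |x.a| * |x.b| + |x.a * x.b - x.c| := by rw [← abs_mul]; exact abs_sub _ _
    _ ≤ α * β + γ := by gcongr
    _ = γ + α * β := add_comm _ _

lemma box_subset_inv_box (α β γ : ℝ) : box α β (γ - α * β) ⊆ (box α β γ)⁻¹ := fun x hx => by
  simpa using inv_box_subset α β (γ - α * β) (Set.inv_mem_inv.2 hx)

lemma haar_symmDiff_inv_box_div_le {α β γ : ℝ} (hα : 0 < α) (hβ : 0 < β) (hγ : 0 < γ) :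
    haar (symmDiff (box α β γ) (box α β γ)⁻¹) / haar (box α β γ)
      ≤ ENNReal.ofReal (2 * (α * β / γ)) := by
  have hαβ : 0 < α * β := mul_pos hα hβ
  have hsub : symmDiff (box α β γ) (box α β γ)⁻¹
      ⊆ (box α β γ \ box α β (γ - α * β)) ∪ (box α β (γ + α * β) \ box α β γ) :=
    union_subset_union (sdiff_subset_sdiff_right (box_subset_inv_box α β γ))
      (sdiff_subset_sdiff_left (inv_box_subset α β γ))
  have hlow := haar_box_diff_le hα.le hβ.le le_rfl le_rfl (by linarith : γ - α * β ≤ γ)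
  have hhigh := haar_box_diff_le hα.le hβ.le le_rfl le_rfl (by linarith : γ ≤ γ + α * β)
  calc haar (symmDiff (box α β γ) (box α β γ)⁻¹) / haar (box α β γ)
      ≤ ENNReal.ofReal (16 * (α * β) ^ 2) / haar (box α β γ) := by
        gcongr
        refine (measure_mono hsub).trans ((measure_union_le _ _).trans
          ((add_le_add hlow hhigh).trans_eq ?_))
        rw [← ENNReal.ofReal_add (by nlinarith) (by nlinarith)]
        ring_nf
    _ = ENNReal.ofReal (2 * (α * β / γ)) := by
        rw [ofReal_div_haar_box hα hβ hγ]
        congr 1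
        field_simp
        ring

end H3

lemma tendsto_enlarged_box_ratio {ι : Type*} {l : Filter ι} {α β γ : ι → ℝ} (r s : ℝ)
    (hα : Tendsto α l atTop) (hβ : Tendsto β l atTop) (hγ : Tendsto γ l atTop)
    (hαγ : Tendsto (fun i => α i / γ i) l (𝓝 0)) (hβγ : Tendsto (fun i => β i / γ i) l (𝓝 0)) :
    Tendsto (fun i => (α i + r) * (β i + r) * (γ i + s + r * (α i + β i)) / (α i * β i * γ i))
      l (𝓝 1) := by
  have hfactor : ∀ᶠ i in l, (1 + r / α i) * (1 + r / β i) *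
      (1 + s / γ i + r * (α i / γ i) + r * (β i / γ i))
        = (α i + r) * (β i + r) * (γ i + s + r * (α i + β i)) / (α i * β i * γ i) := by
    filter_upwards [hα.eventually_gt_atTop 0, hβ.eventually_gt_atTop 0,
      hγ.eventually_gt_atTop 0] with i hαi hβi hγi
    field_simp
    ring
  have hconst (c : ℝ) : Tendsto (fun _ => c) l (𝓝 c) := tendsto_const_nhds
  have hlim := (((hconst 1).add ((hconst r).div_atTop hα)).mul
    ((hconst 1).add ((hconst r).div_atTop hβ))).mul
    ((((hconst 1).add ((hconst s).div_atTop hγ)).add (hαγ.const_mul r)).add (hβγ.const_mul r))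
  simpa using hlim.congr' hfactor

section Statement
open MeasureTheory

/-- A two-sided Følner sequence in `H₃(ℝ)`: compact sets of positive finite Haar measure
such that both `λ(gFₙ ∆ Fₙ)/λ(Fₙ) → 0` and `λ(Fₙg ∆ Fₙ)/λ(Fₙ) → 0`, uniformly in `g`
on compact subsets. -/
def IsTwoSidedFolnerSeq (F : ℕ → Set H3) : Prop :=
  (∀ n, IsCompact (F n) ∧ 0 < H3.haar (F n) ∧ H3.haar (F n) < ⊤) ∧
  ∀ K : Set H3, IsCompact K → ∀ ε : ENNReal, 0 < ε → ∃ N : ℕ, ∀ n ≥ N, ∀ g ∈ K,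
    H3.haar (symmDiff ((g * ·) '' F n) (F n)) / H3.haar (F n) < ε ∧
    H3.haar (symmDiff ((· * g) '' F n) (F n)) / H3.haar (F n) < ε

/-- **Lemma 3.1.** Let `αₙ, βₙ, γₙ → ∞` with `αₙ/γₙ → 0` and `βₙ/γₙ → 0`. Then the boxes
`(I(αₙ,βₙ,γₙ))ₙ` form a two-sided Følner sequence in `H₃(ℝ)`. Moreover, if in addition
`(αₙβₙ)/γₙ → 0`, then `λ(I(αₙ,βₙ,γₙ) ∆ I(αₙ,βₙ,γₙ)⁻¹)/λ(I(αₙ,βₙ,γₙ)) → 0`. -/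
theorem boxes_twoSided_folner (α β γ : ℕ → ℝ)
    (hα : ∀ n, 0 < α n) (hβ : ∀ n, 0 < β n) (hγ : ∀ n, 0 < γ n)
    (hαtop : Tendsto α atTop atTop) (hβtop : Tendsto β atTop atTop)
    (hγtop : Tendsto γ atTop atTop)
    (h1 : Tendsto (fun n => α n / γ n) atTop (𝓝 0))
    (h2 : Tendsto (fun n => β n / γ n) atTop (𝓝 0)) :
    IsTwoSidedFolnerSeq (fun n => H3.box (α n) (β n) (γ n)) ∧
    (Tendsto (fun n => α n * β n / γ n) atTop (𝓝 0) →
      Tendsto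
        (fun n =>
          H3.haar (symmDiff (H3.box (α n) (β n) (γ n)) (H3.box (α n) (β n) (γ n))⁻¹) /
            H3.haar (H3.box (α n) (β n) (γ n)))
        atTop (𝓝 0)) := by
  refine ⟨⟨fun n => ⟨H3.isCompact_box _ _ _, ?_, ?_⟩, fun K hK ε hε => ?_⟩, fun h3 => ?_⟩
  · rw [H3.haar_box (hα n).le (hβ n).le, ENNReal.ofReal_pos]
    have := hα n; have := hβ n; have := hγ n
    positivity
  · rw [H3.haar_box (hα n).le (hβ n).le]
    exact ENNReal.ofReal_lt_top
  · obtain ⟨r, hr⟩ := H3.exists_abs_le_of_isCompact hK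
    have hlim := ENNReal.tendsto_ofReal
      (((tendsto_enlarged_box_ratio r (r ^ 2 + r) hαtop hβtop hγtop h1 h2).sub_const 1).const_mul 2)
    rw [sub_self, mul_zero, ENNReal.ofReal_zero] at hlim
    obtain ⟨N, hN⟩ := eventually_atTop.1 (hlim.eventually_lt_const hε)
    refine ⟨N, fun n hn g hg => ?_⟩
    obtain ⟨ha, hb, hc⟩ := hr g hg
    obtain ⟨hleft, hright⟩ := H3.haar_symmDiff_mul_box_div_le (hα n) (hβ n) (hγ n) ha hb hc
    exact ⟨hleft.trans_lt (hN n hn), hright.trans_lt (hN n hn)⟩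
  · have hlim := ENNReal.tendsto_ofReal (h3.const_mul 2)
    rw [mul_zero, ENNReal.ofReal_zero] at hlim
    exact tendsto_of_tendsto_of_tendsto_of_le_of_le tendsto_const_nhds hlim (fun _ => zero_le)
      fun n => H3.haar_symmDiff_inv_box_div_le (hα n) (hβ n) (hγ n)

end Statement
end

section
/- Let T be a measure-preserving action of H₃(ℝ) on a standard probability space (X, ℬ, μ). If the central flow (T_{c(t)})_{t∈ℝ} is ergodic, then it is weakly mixing: there is no nonzero f ∈ L²(X, μ) and s ∈ ℝ, s ≠ 0, such that f ∘ T_{c(t)} = e^{ist} f μ-a.e. for all t ∈ ℝ, and every f with f ∘ T_{c(t)} = f for all t is constant. -/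
open Filter Topology Pointwise

/-!
An a.e.-invariant set of the central flow differs by a null set from the strictly invariant set
`{x | T_{c(t)} x ∈ A for a.e. t}` (Fubini over `ℝ` and translation invariance of Lebesgue
measure), so ergodicity forces every a.e.-invariant measurable function to be a.e. constant.
If `f ∘ T_{c(t)} = e^{irt} f`, then `|f|` is invariant, hence constant and nonzero, so `f`
vanishes nowhere. As `c(t)` is central, `(f ∘ T_g) / f` is invariant for every `g`, so `f` is an
eigenfunction of the whole action with eigenvalues given by a character `χ` of `H₃(ℝ)`. Since
`c(t) = ⁅a(1), b(t)⁆` is a commutator, `e^{irt} = χ(c(t)) = 1` for all `t`, forcing `r = 0`.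
-/

namespace H3

open scoped commutatorElement

lemma measurable_C : Measurable C := by
  rintro _ ⟨u, hu, rfl⟩
  exact (measurable_const.prodMk (measurable_const.prodMk measurable_id) :
    Measurable fun t : ℝ => ((0 : ℝ), (0 : ℝ), t)) hu

lemma C_add (t u : ℝ) : C (t + u) = C t * C u := by
  ext <;> simp [C]

lemma commute_C (g : H3) (t : ℝ) : Commute g (C t) := by
  ext <;> simp [C]; ring

lemma commutatorElement_A_B (t : ℝ) : ⁅A 1, B t⁆ = C t := by
  ext <;> simp [commutatorElement_def, A, B, C]

lemma map_C_eq_one {M : Type*} [CommMonoid M] (χ : H3 →* M) (t : ℝ) : χ (C t) = 1 := by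
  have h := map_commutatorElement χ.toHomUnits (A 1) (B t)
  rw [commutatorElement_A_B, (Commute.all (χ.toHomUnits (A 1)) _).commutator_eq] at h
  exact congrArg Units.val h

end H3

section CentralFlow

open MeasureTheory Set

theorem MeasureTheory.Measure.ae_add_right_iff {G : Type*} [MeasurableSpace G] [AddGroup G]
    [MeasurableAdd G] (μ : Measure G) [μ.IsAddRightInvariant] (u : G) {p : G → Prop} :
    (∀ᵐ t ∂μ, p (t + u)) ↔ ∀ᵐ t ∂μ, p t := by
  rw [ae_iff, ae_iff, ← measure_preimage_add_right μ u {t | ¬ p t}]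
  rfl

namespace H3System

variable (s : H3System)

lemma measurable_T (g : H3) : Measurable (s.T g) :=
  s.t_meas.comp (measurable_const.prodMk measurable_id)

lemma measurable_centralFlow : Measurable fun p : s.X × ℝ => s.T (H3.C p.2) p.1 :=
  s.t_meas.comp ((H3.measurable_C.comp measurable_snd).prodMk measurable_fst)

lemma T_C_add (t u : ℝ) (x : s.X) :
    s.T (H3.C (t + u)) x = s.T (H3.C t) (s.T (H3.C u) x) := by
  rw [H3.C_add, s.t_mul]

lemma T_comm_C (g : H3) (t : ℝ) (x : s.X) :
    s.T g (s.T (H3.C t) x) = s.T (H3.C t) (s.T g x) := by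
  rw [← s.t_mul, ← s.t_mul, (H3.commute_C g t).eq]

variable {s}

theorem CentralErgodic.measure_eq_zero_or_compl_of_ae_invariant (herg : s.CentralErgodic)
    [SFinite s.μ] {A : Set s.X} (hA : MeasurableSet A)
    (hinv : ∀ t : ℝ, s.T (H3.C t) ⁻¹' A =ᵐ[s.μ] A) : s.μ A = 0 ∨ s.μ Aᶜ = 0 := by
  set A' : Set s.X := {x | ∀ᵐ t : ℝ, s.T (H3.C t) x ∈ A}
  have hE : MeasurableSet {p : s.X × ℝ | s.T (H3.C p.2) p.1 ∈ A} := s.measurable_centralFlow hA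
  have hA'_meas : MeasurableSet A' := by
    have : A' = (fun x => volume (Prod.mk x ⁻¹' {p : s.X × ℝ | s.T (H3.C p.2) p.1 ∈ A}ᶜ)) ⁻¹'
        {0} := by
      ext x
      simp [A', ae_iff, compl_ofPred]
    rw [this]
    exact measurable_measure_prodMk_left hE.compl (measurableSet_singleton 0)
  have hA'_inv : ∀ u : ℝ, s.T (H3.C u) ⁻¹' A' = A' := by
    intro u
    ext x
    simp only [A', mem_preimage, mem_ofPred_eq, ← T_C_add]
    exact volume.ae_add_right_iff u (p := fun t => s.T (H3.C t) x ∈ A)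
  have hA'_ae : A' =ᵐ[s.μ] A := by
    have hfub : ∀ᵐ x ∂s.μ, ∀ᵐ t : ℝ, (s.T (H3.C t) x ∈ A ↔ x ∈ A) :=
      (Measure.ae_ae_comm (hE.mem.iff (hA.mem.comp measurable_fst)).setOf).2
        (ae_of_all _ fun t => (hinv t).mono fun x hx => hx.to_iff)
    filter_upwards [hfub] with x hx
    exact propext ((eventually_congr hx).trans eventually_const)
  rcases herg A' hA'_meas hA'_inv with h | h
  · exact Or.inl (by rwa [measure_congr hA'_ae] at h)
  · exact Or.inr (by rwa [measure_congr hA'_ae.compl] at h)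

theorem CentralErgodic.ae_eq_const_of_ae_invariant (herg : s.CentralErgodic) [SFinite s.μ]
    {Y : Type*} [MeasurableSpace Y] [MeasurableSpace.CountablySeparated Y] [Nonempty Y]
    {g : s.X → Y} (hg : Measurable g)
    (hinv : ∀ t : ℝ, (fun x => g (s.T (H3.C t) x)) =ᵐ[s.μ] g) :
    ∃ c : Y, g =ᵐ[s.μ] fun _ => c := by
  refine exists_eventuallyEq_const_of_forall_separating MeasurableSet fun U hU => ?_
  have hU_inv (t : ℝ) : s.T (H3.C t) ⁻¹' (g ⁻¹' U) =ᵐ[s.μ] g ⁻¹' U :=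
    (hinv t).mono fun x hx => congrArg (· ∈ U) hx
  rcases herg.measure_eq_zero_or_compl_of_ae_invariant (hg hU) hU_inv with h | h
  · exact Or.inr (measure_eq_zero_iff_ae_notMem.1 h)
  · exact Or.inl (mem_ae_iff.2 h)

theorem CentralErgodic.exists_eigenvalue (herg : s.CentralErgodic) [SFinite s.μ]
    {F : s.X → ℂ} (hF : Measurable F) (hF0 : ∀ᵐ x ∂s.μ, F x ≠ 0) {e : ℝ → ℂ}
    (he : ∀ t, e t ≠ 0) (hFe : ∀ t, (fun x => F (s.T (H3.C t) x)) =ᵐ[s.μ] fun x => e t * F x)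
    (g : H3) : ∃ c : ℂ, (fun x => F (s.T g x)) =ᵐ[s.μ] fun x => c * F x := by
  have hratio_inv (t : ℝ) :
      (fun x => F (s.T g (s.T (H3.C t) x)) / F (s.T (H3.C t) x)) =ᵐ[s.μ]
        fun x => F (s.T g x) / F x := by
    filter_upwards [hFe t, (s.t_mp g).quasiMeasurePreserving.ae (hFe t)] with x h h'
    rw [T_comm_C, h, h']
    exact mul_div_mul_left _ _ (he t)
  obtain ⟨c, hc⟩ :=
    herg.ae_eq_const_of_ae_invariant ((hF.comp (s.measurable_T g)).div hF) hratio_inv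
  refine ⟨c, ?_⟩
  filter_upwards [hc, hF0] with x hx h0
  rw [← hx]
  exact (div_mul_cancel₀ _ h0).symm

theorem exists_character_of_eigenfunction [NeZero s.μ] {F : s.X → ℂ}
    (hF0 : ∀ᵐ x ∂s.μ, F x ≠ 0)
    (heigen : ∀ g : H3, ∃ c : ℂ, (fun x => F (s.T g x)) =ᵐ[s.μ] fun x => c * F x) :
    ∃ χ : H3 →* ℂ, ∀ g, (fun x => F (s.T g x)) =ᵐ[s.μ] fun x => χ g * F x := by
  choose c hc using heigen
  refine ⟨{ toFun := c, map_one' := ?_, map_mul' := ?_ }, hc⟩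
  · obtain ⟨x, h1, h0⟩ := ((hc 1).and hF0).exists
    dsimp only at h1
    rw [s.t_one] at h1
    exact (mul_eq_right₀ h0).1 h1.symm
  · intro g h
    obtain ⟨x, hgh, hg, hh, h0⟩ := ((hc (g * h)).and
      (((s.t_mp h).quasiMeasurePreserving.ae (hc g)).and ((hc h).and hF0))).exists
    dsimp only at hgh hg hh
    apply mul_right_cancel₀ h0
    rw [← hgh, s.t_mul, hg, hh, mul_assoc]

theorem CentralErgodic.central_eigenvalue_eq_one (herg : s.CentralErgodic)
    [IsProbabilityMeasure s.μ] {F : s.X → ℂ} (hF : Measurable F) (hF0 : ∀ᵐ x ∂s.μ, F x ≠ 0)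
    {e : ℝ → ℂ} (he : ∀ t, e t ≠ 0)
    (hFe : ∀ t, (fun x => F (s.T (H3.C t) x)) =ᵐ[s.μ] fun x => e t * F x) (t : ℝ) :
    e t = 1 := by
  obtain ⟨χ, hχ⟩ := exists_character_of_eigenfunction hF0 (herg.exists_eigenvalue hF hF0 he hFe)
  obtain ⟨x, he', hχ', h0⟩ := ((hFe t).and ((hχ (H3.C t)).and hF0)).exists
  rw [← H3.map_C_eq_one χ t]
  exact mul_right_cancel₀ h0 (he'.symm.trans hχ')

end H3System

end CentralFlow

section Statement
open MeasureTheory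

/-- **Proposition 3.10.** Let `T` be a measure-preserving action of `H₃(ℝ)` on a standard
probability space. If the central flow `(T_{c(t)})_{t∈ℝ}` is ergodic then it is weakly
mixing: there is no nonzero `f ∈ L²(X,μ)` and `s ≠ 0` with `f ∘ T_{c(t)} = e^{ist} f` a.e.
for all `t`, and every `f ∈ L²(X,μ)` with `f ∘ T_{c(t)} = f` a.e. for all `t` is constant. -/
theorem central_flow_weaklyMixing_of_ergodic (s : H3System) (hstd : s.IsStdProb)
    (herg : s.CentralErgodic) :
    (∀ (f : Lp ℂ 2 s.μ) (r : ℝ), r ≠ 0 →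
      (∀ t : ℝ, (fun x => (f : s.X → ℂ) (s.T (H3.C t) x)) =ᵐ[s.μ]
        fun x => Complex.exp (Complex.I * (r * t : ℝ)) * (f : s.X → ℂ) x) →
      f = 0) ∧
    (∀ f : Lp ℂ 2 s.μ,
      (∀ t : ℝ, (fun x => (f : s.X → ℂ) (s.T (H3.C t) x)) =ᵐ[s.μ] (f : s.X → ℂ)) →
      ∃ z : ℂ, (f : s.X → ℂ) =ᵐ[s.μ] fun _ => z) := by
  have : IsProbabilityMeasure s.μ := hstd.2
  refine ⟨fun f r hr hf => ?_,
    fun f => herg.ae_eq_const_of_ae_invariant (Lp.stronglyMeasurable f).measurable⟩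
  have hFm : Measurable (f : s.X → ℂ) := (Lp.stronglyMeasurable f).measurable
  obtain ⟨c, hc⟩ := herg.ae_eq_const_of_ae_invariant hFm.norm fun t =>
    (hf t).mono fun x hx => by simp [hx, Complex.norm_exp]
  by_contra hf0
  have hc0 : c ≠ 0 := by
    rintro rfl
    exact hf0 (Lp.eq_zero_iff_ae_eq_zero.2 (hc.mono fun x hx => norm_eq_zero.1 hx))
  have hF0 : ∀ᵐ x ∂s.μ, (f : s.X → ℂ) x ≠ 0 :=
    hc.mono fun x hx h0 => hc0 (by simpa [h0] using hx.symm)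
  have h1 :=
    herg.central_eigenvalue_eq_one hFm hF0 (fun _ => Complex.exp_ne_zero _) hf (Real.pi / r)
  rw [mul_div_cancel₀ Real.pi hr, mul_comm, Complex.exp_pi_mul_I] at h1
  norm_num at h1

end Statement
end
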